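/- For every integer $d \ge 1$, the identity $\sum_{t+k+m+n=d,\ t,k,m,n\ge 0} (-1)^n \dfrac{v^{t^2 - 2dt + t + 2nt + \binom{n+1}{2} - 2km - 2m}}{[n]!\,[2k]^{!!}\,[2m]^{!!}} (v - v^{-1})^t = 0$ holds in $\mathbb{Q}(v)$. -/

import Mathlib

noncomputable section

abbrev K : Type := RatFunc ℚ

/-- The indeterminate `v` in `ℚ(v)`. -/
def v : K := RatFunc.X

/-- Quantum integer `[m] = (v^m - v^{-m})/(v - v^{-1})`. -/
def qint (m : ℤ) : K := (v ^ m - v ^ (-m)) / (v - v⁻¹)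

/-- Quantum factorial `[r]! = ∏_{i=1}^r [i]`. -/
def qfact (r : ℕ) : K := ∏ i ∈ Finset.range r, qint ((i : ℤ) + 1)

/-- Quantum double factorial `[2r]!! = ∏_{i=1}^r [2i]`. -/
def qdfact (r : ℕ) : K := ∏ i ∈ Finset.range r, qint (2 * ((i : ℤ) + 1))

/-- Balanced Gaussian binomial coefficient `[m][m-1]⋯[m-r+1]/[r]!`. -/
def qbinom (m : ℤ) (r : ℕ) : K := (∏ i ∈ Finset.range r, qint (m - (i : ℤ))) / qfact r

/-- Gaussian binomial with integer lower index, vanishing for negative lower index. -/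
def qbinomZ (m r : ℤ) : K := if 0 ≤ r then qbinom m r.toNat else 0

/-!
Put `n = d - t - k - m`. The summand factors as
`(-1)^n v^{C(n+1,2)}/[n]! · v^{-(t+k+m)^2} · (v(v - v⁻¹))^t · v^{k^2}/[2k]!! · v^{m^2-2m}/[2m]!!`,
so apart from the weight `v^{-s^2}`, which depends only on `s = t + k + m`, the sum is a Cauchy
product of four series. Three convolution identities evaluate it: the `(k, m)`-convolution is
`v^{C(r,2)}/[r]!`; convolving that with `(v(v - v⁻¹))^t` gives `v^{C(s,2)+2s}/[s]!`, which the
weight turns into `v^{s-C(s,2)}/[s]!`; and `∑_{n+s=d} (-1)^n v^{C(n+1,2)}/[n]! · v^{s-C(s,2)}/[s]!`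
vanishes for `d ≥ 1`, a `q`-analogue of `e^x e^{-x} = 1`. Each identity is proved by induction,
after multiplying by a quantum integer and splitting it as `[x + y] = v^y [x] + v^{-x} [y]`.
-/

open Finset

lemma v_ne_zero : v ≠ 0 := RatFunc.X_ne_zero

lemma v_pow_ne_one {n : ℕ} (hn : n ≠ 0) : v ^ n ≠ 1 := by
  intro h
  have := congrArg RatFunc.intDegree h
  rw [v, ← RatFunc.algebraMap_X, ← map_pow, RatFunc.intDegree_polynomial,
    RatFunc.intDegree_one, Polynomial.natDegree_X_pow] at this
  exact hn (by exact_mod_cast this)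

lemma v_zpow_ne_one {n : ℤ} (hn : n ≠ 0) : v ^ n ≠ 1 := by
  obtain ⟨m, rfl | rfl⟩ := Int.eq_nat_or_neg n
  · simpa using v_pow_ne_one (n := m) (by omega)
  · simpa using v_pow_ne_one (n := m) (by omega)

lemma v_zpow_sub_zpow_neg_ne_zero {m : ℤ} (hm : m ≠ 0) : v ^ m - v ^ (-m) ≠ 0 := by
  intro h
  apply v_zpow_ne_one (mul_ne_zero two_ne_zero hm)
  rw [two_mul, zpow_add₀ v_ne_zero]
  nth_rw 2 [sub_eq_zero.mp h]
  rw [← zpow_add₀ v_ne_zero, add_neg_cancel, zpow_zero]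

lemma v_sub_v_inv_ne_zero : v - v⁻¹ ≠ 0 := by
  simpa using v_zpow_sub_zpow_neg_ne_zero one_ne_zero

lemma qint_mul_v_sub_v_inv (m : ℤ) : qint m * (v - v⁻¹) = v ^ m - v ^ (-m) :=
  div_mul_cancel₀ _ v_sub_v_inv_ne_zero

@[simp] lemma qint_zero : qint 0 = 0 := by simp [qint]

lemma qint_ne_zero {m : ℤ} (hm : m ≠ 0) : qint m ≠ 0 :=
  div_ne_zero (v_zpow_sub_zpow_neg_ne_zero hm) v_sub_v_inv_ne_zero

lemma qint_add (x y : ℤ) : qint (x + y) = v ^ y * qint x + v ^ (-x) * qint y := by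
  simp only [qint, neg_add, zpow_add₀ v_ne_zero]
  ring

lemma qint_two_mul (m : ℤ) : qint (2 * m) = (v ^ m + v ^ (-m)) * qint m := by
  simp only [qint, two_mul, neg_add, zpow_add₀ v_ne_zero]
  ring

lemma qfact_succ (n : ℕ) : qfact (n + 1) = qfact n * qint (n + 1) := prod_range_succ _ _

lemma qdfact_succ (n : ℕ) : qdfact (n + 1) = qdfact n * qint (2 * (n + 1)) :=
  prod_range_succ _ _

lemma cast_choose_two_succ (n : ℕ) : ((n + 1).choose 2 : ℤ) = n.choose 2 + n := by
  rw [Nat.choose_succ_succ', Nat.choose_one_right]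
  push_cast
  ring

lemma two_mul_cast_choose_two (n : ℕ) : 2 * (n.choose 2 : ℤ) = n ^ 2 - n := by
  induction n with
  | zero => simp
  | succ n ih =>
    rw [cast_choose_two_succ]
    push_cast
    linear_combination ih

def qexpCoeff (a c : ℤ) (n : ℕ) : K := v ^ (a * n.choose 2 + c * n) / qfact n

def qdexpCoeff (c : ℤ) (k : ℕ) : K := v ^ ((k : ℤ) ^ 2 + c * k) / qdfact k

lemma qint_mul_qexpCoeff_succ (a c : ℤ) (n : ℕ) :
    qint (n + 1) * qexpCoeff a c (n + 1) = v ^ (a * n + c) * qexpCoeff a c n := by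
  have hq : qint (n + 1) ≠ 0 := qint_ne_zero (by omega)
  rw [qexpCoeff, qexpCoeff, qfact_succ, cast_choose_two_succ,
    show a * (n.choose 2 + n : ℤ) + c * (n + 1 : ℕ) = (a * n + c) + (a * n.choose 2 + c * n) by
      push_cast; ring,
    zpow_add₀ v_ne_zero]
  field_simp

lemma qexpCoeff_add_right (a c b : ℤ) (n : ℕ) :
    qexpCoeff a (c + b) n = v ^ (b * n) * qexpCoeff a c n := by
  rw [qexpCoeff, qexpCoeff, mul_div_assoc', ← zpow_add₀ v_ne_zero]
  ring_nf

lemma zpow_neg_sq_mul_qexpCoeff (a c : ℤ) (n : ℕ) :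
    v ^ (-(n : ℤ) ^ 2) * qexpCoeff a c n = qexpCoeff (a - 2) (c - 1) n := by
  rw [qexpCoeff, qexpCoeff, mul_div_assoc', ← zpow_add₀ v_ne_zero]
  congr 2
  linear_combination two_mul_cast_choose_two n

lemma qint_two_mul_succ_mul_qexpCoeff_succ (c : ℤ) (n : ℕ) :
    qint (2 * (n + 1)) * qexpCoeff 1 c (n + 1) =
      (v ^ (2 * n + 1 + c) + v ^ (c - 1)) * qexpCoeff 1 c n := by
  rw [qint_two_mul, mul_assoc, qint_mul_qexpCoeff_succ, ← mul_assoc, add_mul,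
    ← zpow_add₀ v_ne_zero, ← zpow_add₀ v_ne_zero]
  ring_nf

lemma qexpCoeff_add_two_succ (c : ℤ) (s : ℕ) :
    qexpCoeff 1 (c + 2) (s + 1) =
      qexpCoeff 1 c (s + 1) + v ^ (c + 1) * (v - v⁻¹) * qexpCoeff 1 (c + 2) s := by
  apply mul_left_cancel₀ (qint_ne_zero (by omega : (s : ℤ) + 1 ≠ 0))
  rw [mul_add, ← mul_assoc, mul_left_comm, qint_mul_v_sub_v_inv, qint_mul_qexpCoeff_succ,
    qint_mul_qexpCoeff_succ, qexpCoeff_add_right 1 c 2]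
  simp only [zpow_add₀ v_ne_zero, zpow_neg, zpow_natCast, zpow_mul, zpow_one, one_mul]
  field_simp [v_ne_zero]
  ring

lemma qint_mul_qdexpCoeff_succ (c : ℤ) (k : ℕ) :
    qint (2 * (k + 1)) * qdexpCoeff c (k + 1) = v ^ (2 * k + 1 + c) * qdexpCoeff c k := by
  have hq : qint (2 * (k + 1)) ≠ 0 := qint_ne_zero (by omega)
  rw [qdexpCoeff, qdexpCoeff, qdfact_succ,
    show ((k + 1 : ℕ) : ℤ) ^ 2 + c * (k + 1 : ℕ) = (2 * k + 1 + c) + (k ^ 2 + c * k) by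
      push_cast; ring,
    zpow_add₀ v_ne_zero]
  field_simp

lemma qdexpCoeff_sub_two_mul_qdexpCoeff_swap (c : ℤ) (k m : ℕ) :
    v ^ (-(2 * k : ℤ)) * qdexpCoeff c k * (v ^ (2 * m : ℤ) * qdexpCoeff (c - 2) m) =
      qdexpCoeff (c - 2) k * qdexpCoeff c m := by
  simp only [qdexpCoeff, zpow_add₀ v_ne_zero, zpow_sub₀ v_ne_zero, zpow_neg, zpow_natCast,
    zpow_mul, sub_mul]
  field_simp [v_ne_zero]

-- A `q`-Leibniz rule: `qint_add` splits `[c (r + 1)]` as `[c i + c j]` over `i + j = r + 1`.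
lemma qint_mul_sum_antidiagonal_succ (c : ℤ) (f g : ℕ → K) (r : ℕ) :
    qint (c * (r + 1)) * ∑ p ∈ antidiagonal (r + 1), f p.1 * g p.2 =
      ∑ p ∈ antidiagonal r, v ^ (c * p.2) * (qint (c * (p.1 + 1)) * f (p.1 + 1)) * g p.2 +
      ∑ p ∈ antidiagonal r, v ^ (-(c * p.1)) * f p.1 * (qint (c * (p.2 + 1)) * g (p.2 + 1)) := by
  have hsplit : ∀ p ∈ antidiagonal (r + 1), qint (c * (r + 1)) * (f p.1 * g p.2) =
      v ^ (c * p.2) * (qint (c * p.1) * f p.1) * g p.2 +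
        v ^ (-(c * p.1)) * f p.1 * (qint (c * p.2) * g p.2) := by
    intro p hp
    have hsum : (p.1 + p.2 : ℤ) = r + 1 := by exact_mod_cast mem_antidiagonal.mp hp
    rw [show c * ((r : ℤ) + 1) = c * p.1 + c * p.2 by linear_combination -c * hsum, qint_add]
    ring
  rw [mul_sum, sum_congr rfl hsplit, sum_add_distrib, Nat.sum_antidiagonal_succ,
    Nat.sum_antidiagonal_succ']
  simp

theorem sum_antidiagonal_qdexpCoeff_mul_qdexpCoeff (c : ℤ) (r : ℕ) :
    ∑ p ∈ antidiagonal r, qdexpCoeff c p.1 * qdexpCoeff (c - 2) p.2 = qexpCoeff 1 c r := by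
  induction r with
  | zero => simp [qdexpCoeff, qexpCoeff, qfact, qdfact]
  | succ r ih =>
    apply mul_left_cancel₀ (qint_ne_zero (by omega : (2 : ℤ) * (r + 1) ≠ 0))
    rw [qint_mul_sum_antidiagonal_succ, qint_two_mul_succ_mul_qexpCoeff_succ, ← ih, add_mul,
      mul_sum, mul_sum]
    simp only [qint_mul_qdexpCoeff_succ]
    congr 1
    · refine sum_congr rfl fun p hp ↦ ?_
      have hsum : (p.1 + p.2 : ℤ) = r := by exact_mod_cast mem_antidiagonal.mp hp
      rw [show 2 * (r : ℤ) + 1 + c = 2 * p.2 + (2 * p.1 + 1 + c) by linear_combination -2 * hsum,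
        zpow_add₀ v_ne_zero (2 * (p.2 : ℤ))]
      ring
    · rw [← Nat.sum_antidiagonal_swap]
      refine sum_congr rfl fun p _ ↦ ?_
      rw [Prod.fst_swap, Prod.snd_swap,
        show 2 * (p.1 : ℤ) + 1 + (c - 2) = (c - 1) + 2 * p.1 by ring, zpow_add₀ v_ne_zero]
      linear_combination v ^ (c - 1) * qdexpCoeff_sub_two_mul_qdexpCoeff_swap c p.2 p.1

theorem sum_antidiagonal_pow_mul_qexpCoeff (c : ℤ) (s : ℕ) :
    ∑ p ∈ antidiagonal s, (v ^ (c + 1) * (v - v⁻¹)) ^ p.1 * qexpCoeff 1 c p.2 =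
      qexpCoeff 1 (c + 2) s := by
  induction s with
  | zero => simp [qexpCoeff]
  | succ s ih =>
    simp only [Nat.sum_antidiagonal_succ, pow_zero, one_mul, pow_succ', mul_assoc, ← mul_sum, ih]
    rw [qexpCoeff_add_two_succ, mul_assoc]

theorem sum_antidiagonal_neg_one_pow_mul_qexpCoeff_mul_qexpCoeff (c : ℤ) {d : ℕ} (hd : d ≠ 0) :
    ∑ p ∈ antidiagonal d, (-1) ^ p.1 * qexpCoeff 1 c p.1 * qexpCoeff (-1) c p.2 = 0 := by
  have hrec (e : ℕ) :
      qint (e + 1) *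
          ∑ p ∈ antidiagonal (e + 1), (-1) ^ p.1 * qexpCoeff 1 c p.1 * qexpCoeff (-1) c p.2 =
        (v ^ (c - e) - v ^ (e + c)) *
          ∑ p ∈ antidiagonal e, (-1) ^ p.1 * qexpCoeff 1 c p.1 * qexpCoeff (-1) c p.2 := by
    rw [← one_mul ((e : ℤ) + 1),
      qint_mul_sum_antidiagonal_succ 1 (fun n ↦ (-1) ^ n * qexpCoeff 1 c n) (qexpCoeff (-1) c),
      sub_mul, mul_sum, mul_sum, sub_eq_neg_add, ← sum_neg_distrib]
    simp only [one_mul]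
    congr 1
    · refine sum_congr rfl fun p hp ↦ ?_
      have hsum : (p.1 + p.2 : ℤ) = e := by exact_mod_cast mem_antidiagonal.mp hp
      rw [show qint (p.1 + 1) * ((-1) ^ (p.1 + 1) * qexpCoeff 1 c (p.1 + 1)) =
          -((-1) ^ p.1 * (qint (p.1 + 1) * qexpCoeff 1 c (p.1 + 1))) by ring,
        qint_mul_qexpCoeff_succ, show (e : ℤ) + c = p.2 + (1 * p.1 + c) by omega,
        zpow_add₀ v_ne_zero (p.2 : ℤ)]
      ring
    · refine sum_congr rfl fun p hp ↦ ?_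
      have hsum : (p.1 + p.2 : ℤ) = e := by exact_mod_cast mem_antidiagonal.mp hp
      rw [qint_mul_qexpCoeff_succ, show c - e = -p.1 + (-1 * p.2 + c) by omega,
        zpow_add₀ v_ne_zero (-(p.1 : ℤ))]
      ring
  obtain ⟨e, rfl⟩ := Nat.exists_eq_succ_of_ne_zero hd
  induction e with
  | zero => simpa [qint_ne_zero one_ne_zero] using hrec 0
  | succ e ih =>
    simpa [ih, qint_ne_zero (by omega : (e : ℤ) + 1 + 1 ≠ 0)] using hrec (e + 1)

lemma sum_range_sum_antidiagonal_sub {M : Type*} [AddCommMonoid M] (N : ℕ)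
    (f : ℕ → ℕ → ℕ → M) :
    ∑ i ∈ range (N + 1), ∑ p ∈ antidiagonal (N - i), f i p.1 p.2 =
      ∑ p ∈ antidiagonal N, ∑ q ∈ antidiagonal p.1, f q.1 q.2 p.2 := by
  rw [sum_sigma', sum_sigma']
  refine sum_nbij' (fun x ↦ ⟨(x.1 + x.2.1, x.2.2), (x.1, x.2.1)⟩)
    (fun y ↦ ⟨y.2.1, (y.2.2, y.1.2)⟩) ?_ ?_ ?_ ?_ (fun _ _ ↦ rfl)
  · rintro ⟨i, j, n⟩ h
    simp only [mem_sigma, mem_range, HasAntidiagonal.mem_antidiagonal] at h ⊢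
    grind
  · rintro ⟨⟨a, n⟩, i, j⟩ h
    simp only [mem_sigma, mem_range, HasAntidiagonal.mem_antidiagonal] at h ⊢
    grind
  · rintro ⟨i, j, n⟩ _
    rfl
  · rintro ⟨⟨a, n⟩, i, j⟩ h
    simp only [mem_sigma, HasAntidiagonal.mem_antidiagonal] at h
    simp [h.2]

lemma sum_range_triangle_eq_sum_antidiagonal {M : Type*} [AddCommMonoid M] (d : ℕ)
    (f : ℕ → ℕ → ℕ → ℕ → M) :
    ∑ t ∈ range (d + 1), ∑ k ∈ range (d + 1 - t), ∑ m ∈ range (d + 1 - t - k),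
        f t k m (d - t - k - m) =
      ∑ p ∈ antidiagonal d, ∑ q ∈ antidiagonal p.1, ∑ r ∈ antidiagonal q.2, f q.1 r.1 r.2 p.2 :=
  calc _ = ∑ t ∈ range (d + 1), ∑ k ∈ range (d - t + 1), ∑ p ∈ antidiagonal (d - t - k),
        f t k p.1 p.2 := by
        refine sum_congr rfl fun t ht ↦ ?_
        rw [Nat.sub_add_comm (mem_range_succ_iff.mp ht)]
        refine sum_congr rfl fun k hk ↦ ?_
        rw [Nat.sum_antidiagonal_eq_sum_range_succ (f t k),
          Nat.sub_add_comm (mem_range_succ_iff.mp hk)]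
    _ = ∑ t ∈ range (d + 1), ∑ p ∈ antidiagonal (d - t), ∑ q ∈ antidiagonal p.1,
        f t q.1 q.2 p.2 :=
      sum_congr rfl fun t _ ↦ sum_range_sum_antidiagonal_sub (d - t) (f t)
    _ = _ := sum_range_sum_antidiagonal_sub d fun t b n ↦ ∑ r ∈ antidiagonal b, f t r.1 r.2 n

def summand (t k m n : ℕ) : K :=
  (-1) ^ n * qexpCoeff 1 1 n * (v ^ (-((t + k + m : ℕ) : ℤ) ^ 2) *
    ((v * (v - v⁻¹)) ^ t * (qdexpCoeff 0 k * qdexpCoeff (-2) m)))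

lemma neg_one_pow_mul_zpow_div_eq_summand {d t k m n : ℕ} (h : t + k + m + n = d) :
    (-1 : K) ^ n *
          v ^ ((t : ℤ) ^ 2 - 2 * (d : ℤ) * t + (t : ℤ)
                + 2 * (n : ℤ) * t
                + ((n * (n + 1) / 2 : ℕ) : ℤ)
                - 2 * (k : ℤ) * m - 2 * (m : ℤ)) *
          (v - v⁻¹) ^ t /
          (qfact n * qdfact k * qdfact m) =
      summand t k m n := by
  have htri : n * (n + 1) / 2 = (n + 1).choose 2 := by
    rw [Nat.choose_two_right, Nat.add_sub_cancel, mul_comm]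
  rw [htri, cast_choose_two_succ,
    show (t : ℤ) ^ 2 - 2 * (d : ℤ) * t + t + 2 * (n : ℤ) * t + (n.choose 2 + n : ℤ)
        - 2 * (k : ℤ) * m - 2 * (m : ℤ) =
      -((t + k + m : ℕ) : ℤ) ^ 2 + t + ((k : ℤ) ^ 2 + 0 * k) + ((m : ℤ) ^ 2 + -2 * m)
        + (1 * n.choose 2 + 1 * n) by subst h; push_cast; ring]
  simp only [summand, qexpCoeff, qdexpCoeff, zpow_add₀ v_ne_zero, zpow_natCast, mul_pow]
  ring

lemma sum_antidiagonal_sum_antidiagonal_summand (a n : ℕ) :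
    ∑ q ∈ antidiagonal a, ∑ r ∈ antidiagonal q.2, summand q.1 r.1 r.2 n =
      (-1) ^ n * qexpCoeff 1 1 n * qexpCoeff (-1) 1 a := by
  have hkm (b : ℕ) :
      ∑ r ∈ antidiagonal b, qdexpCoeff 0 r.1 * qdexpCoeff (-2) r.2 = qexpCoeff 1 0 b := by
    simpa using sum_antidiagonal_qdexpCoeff_mul_qdexpCoeff 0 b
  have htkm :
      ∑ q ∈ antidiagonal a, (v * (v - v⁻¹)) ^ q.1 * qexpCoeff 1 0 q.2 = qexpCoeff 1 2 a := by
    simpa using sum_antidiagonal_pow_mul_qexpCoeff 0 a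
  calc _ = ∑ q ∈ antidiagonal a, ∑ r ∈ antidiagonal q.2, (-1) ^ n * qexpCoeff 1 1 n *
        (v ^ (-(a : ℤ) ^ 2) *
          ((v * (v - v⁻¹)) ^ q.1 * (qdexpCoeff 0 r.1 * qdexpCoeff (-2) r.2))) := by
        refine sum_congr rfl fun q hq ↦ sum_congr rfl fun r hr ↦ ?_
        rw [HasAntidiagonal.mem_antidiagonal] at hq hr
        rw [summand, ← hq, ← hr, ← add_assoc]
    _ = _ := by
        simp_rw [← mul_sum, hkm, htkm, zpow_neg_sq_mul_qexpCoeff]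
        norm_num

theorem stmt3 (d : ℕ) (hd : 1 ≤ d) :
    ∑ t ∈ Finset.range (d + 1), ∑ k ∈ Finset.range (d + 1 - t),
      ∑ m ∈ Finset.range (d + 1 - t - k),
        (-1 : K) ^ (d - t - k - m) *
          v ^ ((t : ℤ) ^ 2 - 2 * (d : ℤ) * t + (t : ℤ)
                + 2 * ((d - t - k - m : ℕ) : ℤ) * t
                + (((d - t - k - m) * (d - t - k - m + 1) / 2 : ℕ) : ℤ)
                - 2 * (k : ℤ) * m - 2 * (m : ℤ)) *
          (v - v⁻¹) ^ t /
          (qfact (d - t - k - m) * qdfact k * qdfact m)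
    = 0 := by
  calc _ = ∑ t ∈ range (d + 1), ∑ k ∈ range (d + 1 - t), ∑ m ∈ range (d + 1 - t - k),
        summand t k m (d - t - k - m) := by
        refine sum_congr rfl fun t ht ↦ sum_congr rfl fun k hk ↦ sum_congr rfl fun m hm ↦ ?_
        simp only [mem_range] at ht hk hm
        exact neg_one_pow_mul_zpow_div_eq_summand (by omega)
    _ = ∑ p ∈ antidiagonal d, ∑ q ∈ antidiagonal p.1, ∑ r ∈ antidiagonal q.2,
        summand q.1 r.1 r.2 p.2 := sum_range_triangle_eq_sum_antidiagonal d summand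
    _ = ∑ p ∈ antidiagonal d, (-1) ^ p.2 * qexpCoeff 1 1 p.2 * qexpCoeff (-1) 1 p.1 :=
      sum_congr rfl fun p _ ↦ sum_antidiagonal_sum_antidiagonal_summand p.1 p.2
    _ = 0 := by
      rw [← Nat.sum_antidiagonal_swap]
      exact sum_antidiagonal_neg_one_pow_mul_qexpCoeff_mul_qexpCoeff 1 (by omega)
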